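/- arXiv:2312.06688 — 4 statements merged into one kernel-verified Lean document; each statement's English description precedes it below -/
import Mathlib

section
/- For all nonzero complex numbers z₁ and z₂, one has |z₁ + z₂| ≤ |z₁| + |z₂| − (1/16)·(Arg(z₁/z₂))²·min(|z₁|, |z₂|). -/
/-- For all nonzero complex numbers `z₁` and `z₂`,
`|z₁ + z₂| ≤ |z₁| + |z₂| − (1/16)·(Arg(z₁/z₂))²·min(|z₁|, |z₂|)`. -/
theorem abs_add_le_with_angle (z₁ z₂ : ℂ) (h₁ : z₁ ≠ 0) (h₂ : z₂ ≠ 0) :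
    ‖z₁ + z₂‖ ≤
      ‖z₁‖ + ‖z₂‖ -
        (1 / 16) * (Complex.arg (z₁ / z₂)) ^ 2 * min ‖z₁‖ ‖z₂‖ := by
  set r := ‖z₁‖ with hr
  set s := ‖z₂‖ with hs
  set T := ‖z₁ + z₂‖ with hT
  set θ := Complex.arg (z₁ / z₂) with hθ
  have hr0 : 0 < r := norm_pos_iff.2 h₁
  have hs0 : 0 < s := norm_pos_iff.2 h₂
  have hT0 : 0 ≤ T := norm_nonneg _
  have hTle : T ≤ r + s := norm_add_le _ _
  have hθπ : |θ| ≤ Real.pi := Complex.abs_arg_le_pi _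
  -- arg (z₁/z₂) = arg (z₁ * conj z₂)
  have harg : Complex.arg (z₁ * (starRingEnd ℂ) z₂) = θ := by
    have hn : (0 : ℝ) < (Complex.normSq z₂)⁻¹ :=
      inv_pos.2 (Complex.normSq_pos.2 h₂)
    have : z₁ / z₂ = ((Complex.normSq z₂)⁻¹ : ℝ) * (z₁ * (starRingEnd ℂ) z₂) := by
      rw [div_eq_mul_inv, Complex.inv_def]
      push_cast
      ring
    rw [hθ, this, Complex.arg_real_mul _ hn]
  -- real part identity
  have hmulne : z₁ * (starRingEnd ℂ) z₂ ≠ 0 := by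
    simp [h₁, h₂]
  have hre : (z₁ * (starRingEnd ℂ) z₂).re = r * s * Real.cos θ := by
    have hc := Complex.cos_arg hmulne
    rw [harg] at hc
    have habs : ‖z₁ * (starRingEnd ℂ) z₂‖ = r * s := by
      simp [map_mul, hr, hs]
    rw [eq_div_iff (by rw [habs]; positivity)] at hc
    rw [← hc, habs]; ring
  -- identity for T²
  have hid : T ^ 2 = r ^ 2 + s ^ 2 + 2 * (r * s * Real.cos θ) := by
    rw [hT, hr, hs, Complex.sq_norm, Complex.sq_norm, Complex.sq_norm, Complex.normSq_add, hre]
  -- cosine bound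
  have hcos : Real.cos θ ≤ 1 - 2 / Real.pi ^ 2 * θ ^ 2 :=
    Real.cos_le_one_sub_mul_cos_sq hθπ
  have hπ4 : Real.pi ≤ 4 := Real.pi_le_four
  have hπ0 : 0 < Real.pi := Real.pi_pos
  have hcos' : Real.cos θ ≤ 1 - θ ^ 2 / 8 := by
    have h1 : θ ^ 2 / 8 ≤ 2 / Real.pi ^ 2 * θ ^ 2 := by
      rw [div_mul_eq_mul_div, div_le_div_iff₀ (by norm_num) (by positivity)]
      nlinarith [mul_nonneg (sq_nonneg θ) (by nlinarith : (0:ℝ) ≤ 16 - Real.pi ^ 2)]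
    linarith
  -- min bounds
  have hm1 : min r s ≤ r := min_le_left _ _
  have hm2 : min r s ≤ s := min_le_right _ _
  have hm0 : 0 ≤ min r s := le_min hr0.le hs0.le
  -- main estimate
  nlinarith [mul_le_mul_of_nonneg_left hcos' (mul_pos hr0 hs0).le,
    sq_nonneg (r + s - T),
    mul_nonneg (mul_nonneg (sq_nonneg θ) hs0.le) (sub_nonneg.2 hm1),
    mul_nonneg (mul_nonneg (sq_nonneg θ) hr0.le) (sub_nonneg.2 hm2),
    add_pos hr0 hs0, hT0]
end

section
/- Let (X, d) be a metric space, let α ∈ (0, 1], and let B > 0. Let Y ⊆ X be a nonempty subset with B·(diam_d(Y))^α ≤ 1/16. Let h: Y → ℝ satisfy h(x) > 0 and |h(x) − h(y)| ≤ B(h(x) + h(y))·d(x, y)^α for all x, y ∈ Y, and let u: Y → ℂ satisfy |u(x)| ≤ h(x) for all x ∈ Y and |u(x) − u(y)| ≤ B(h(x) + h(y))·d(x, y)^α for all x, y ∈ Y. Then at least one of the following two statements holds: (1) |u(x)| ≤ (3/4)·h(x) for all x ∈ Y; (2) |u(x)| ≥ (1/4)·h(x) for all x ∈ Y. -/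
/-- Dichotomy lemma: let `Y` be a nonempty (bounded) subset of a metric space with
`B·(diam_d Y)^α ≤ 1/16`, let `h : Y → ℝ` be positive with
`|h(x) − h(y)| ≤ B(h(x) + h(y))·d(x,y)^α` on `Y`, and let `u : Y → ℂ` satisfy
`|u| ≤ h` and `|u(x) − u(y)| ≤ B(h(x) + h(y))·d(x,y)^α` on `Y`. Then either
`|u| ≤ (3/4)·h` on `Y`, or `|u| ≥ (1/4)·h` on `Y`. -/
theorem dolgopyat_dichotomy {X : Type*} [MetricSpace X] (α B : ℝ)
    (hα₀ : 0 < α) (hα₁ : α ≤ 1) (hB : 0 < B)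
    (Y : Set X) (hY : Y.Nonempty) (hbdd : Bornology.IsBounded Y)
    (hdiam : B * Metric.diam Y ^ α ≤ 1 / 16)
    (h : X → ℝ) (u : X → ℂ)
    (hpos : ∀ x ∈ Y, 0 < h x)
    (hh : ∀ x ∈ Y, ∀ y ∈ Y, |h x - h y| ≤ B * (h x + h y) * dist x y ^ α)
    (hub : ∀ x ∈ Y, ‖u x‖ ≤ h x)
    (hu : ∀ x ∈ Y, ∀ y ∈ Y, ‖u x - u y‖ ≤ B * (h x + h y) * dist x y ^ α) :
    (∀ x ∈ Y, ‖u x‖ ≤ (3 / 4) * h x) ∨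
      (∀ x ∈ Y, (1 / 4) * h x ≤ ‖u x‖) := by
  have key : ∀ x ∈ Y, ∀ y ∈ Y, B * (h x + h y) * dist x y ^ α ≤ (1/16) * (h x + h y) := by
    intro x hx y hy
    have hd : dist x y ^ α ≤ Metric.diam Y ^ α :=
      Real.rpow_le_rpow dist_nonneg (Metric.dist_le_diam_of_mem hbdd hx hy) hα₀.le
    have hnn : (0:ℝ) ≤ h x + h y := by
      have := hpos x hx; have := hpos y hy; linarith
    have h1 : B * dist x y ^ α ≤ 1/16 := by
      calc B * dist x y ^ α ≤ B * Metric.diam Y ^ α := by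
            exact mul_le_mul_of_nonneg_left hd hB.le
        _ ≤ 1/16 := hdiam
    calc B * (h x + h y) * dist x y ^ α = (B * dist x y ^ α) * (h x + h y) := by ring
      _ ≤ (1/16) * (h x + h y) := mul_le_mul_of_nonneg_right h1 hnn
  by_cases hcase : ∀ x ∈ Y, ‖u x‖ ≤ (3 / 4) * h x
  · exact Or.inl hcase
  · right
    push_neg at hcase
    obtain ⟨x₀, hx₀, hbig⟩ := hcase
    intro y hy
    have hhb : |h y - h x₀| ≤ (1/16) * (h y + h x₀) :=
      le_trans (hh y hy x₀ hx₀) (key y hy x₀ hx₀)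
    have hub' : ‖u x₀ - u y‖ ≤ (1/16) * (h x₀ + h y) :=
      le_trans (hu x₀ hx₀ y hy) (key x₀ hx₀ y hy)
    have htri : ‖u x₀‖ - ‖u y‖ ≤ ‖u x₀ - u y‖ := by
      simpa using norm_sub_norm_le (u x₀) (u y)
    have habs := abs_le.mp hhb
    have hpy := hpos y hy
    have hpx := hpos x₀ hx₀
    linarith
end

section
/- Let z ∈ ℂ, R > 0, δ > 0, and U ≥ 0. Let F be a complex-valued function that is holomorphic on an open set containing the closed disk Δ := {s ∈ ℂ : |s − z| ≤ R(1+δ)³}. Assume that: (i) F has no zeros on the set {s ∈ ℂ : |s − z| ≤ R(1+δ)², Re(s) > Re(z) − R(1+δ)} (in particular F(z) ≠ 0); and (ii) log|F(s)| ≤ U + log|F(z)| for all s ∈ Δ. Then for each s ∈ ℂ with |s − z| ≤ R, one has |F′(s)/F(s)| ≤ ((2 + δ)/δ) · ( |F′(z)/F(z)| + ((2 + (1+δ)⁻²)(1+δ) / (R·δ²)) · U ). -/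
open Complex Metric Set intervalIntegral

lemma abs_sub_le_of_uIcc {x a b t : ℝ} (hx : x ∈ Set.uIcc a b) :
    |x - t| ≤ max (|a - t|) (|b - t|) := by
  rw [Set.mem_uIcc] at hx
  have h1 := le_abs_self (a - t); have h2 := le_abs_self (b - t)
  have h3 := neg_abs_le (a - t); have h4 := neg_abs_le (b - t)
  have h5 := le_max_left (|a - t|) (|b - t|); have h6 := le_max_right (|a - t|) (|b - t|)
  rcases hx with ⟨u, v⟩ | ⟨u, v⟩ <;> rw [abs_le] <;> constructor <;> linarith

lemma mem_ball_aux {c w p : ℂ} {r e : ℝ} (he : 0 ≤ e)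
    (hw : ‖w - c‖ + 2 * e < r)
    (hre : |p.re - c.re| ≤ |w.re - c.re| + e)
    (him : |p.im - c.im| ≤ |w.im - c.im| + e) : p ∈ Metric.ball c r := by
  have hd0 : (0:ℝ) ≤ ‖w - c‖ := norm_nonneg _
  have hr0 : (0:ℝ) < r := by linarith
  have ha : |w.re - c.re| ≤ ‖w - c‖ := by
    simpa using Complex.abs_re_le_norm (w - c)
  have hb : |w.im - c.im| ≤ ‖w - c‖ := by
    simpa using Complex.abs_im_le_norm (w - c)
  rw [Metric.mem_ball, Complex.dist_eq]
  refine lt_of_pow_lt_pow_left₀ 2 hr0.le ?_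
  have h2 : ‖p - c‖ ^ 2 = (p.re - c.re) ^ 2 + (p.im - c.im) ^ 2 := by
    rw [Complex.sq_norm, Complex.normSq_apply]; simp [Complex.sub_re, Complex.sub_im]; ring
  rw [h2]
  have e1 : (p.re - c.re) ^ 2 ≤ (|w.re - c.re| + e) ^ 2 := by
    have := abs_nonneg (p.re - c.re)
    nlinarith [_root_.sq_abs (p.re - c.re)]
  have e2 : (p.im - c.im) ^ 2 ≤ (|w.im - c.im| + e) ^ 2 := by
    have := abs_nonneg (p.im - c.im)
    nlinarith [_root_.sq_abs (p.im - c.im)]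
  have key : (|w.re - c.re| + e) ^ 2 + (|w.im - c.im| + e) ^ 2 < r ^ 2 := by
    have hsq : |w.re - c.re| ^ 2 + |w.im - c.im| ^ 2 = ‖w - c‖ ^ 2 := by
      rw [Complex.sq_norm, Complex.normSq_apply]
      simp [Complex.sub_re, Complex.sub_im, _root_.sq_abs]; ring
    nlinarith [abs_nonneg (w.re - c.re), abs_nonneg (w.im - c.im)]
  linarith

lemma exists_primitive {c : ℂ} {r : ℝ} {g : ℂ → ℂ}
    (hg : DifferentiableOn ℂ g (Metric.ball c r)) :
    ∃ P : ℂ → ℂ, ∀ w ∈ Metric.ball c r, HasDerivAt P (g w) w := by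
  have hgc : ContinuousOn g (Metric.ball c r) := hg.continuousOn
  -- rectangle Cauchy in real coordinates
  have rect : ∀ s1 s2 t1 t2 : ℝ, (Set.uIcc s1 s2 ×ℂ Set.uIcc t1 t2 ⊆ Metric.ball c r) →
      (∫ x in s1..s2, g (x + t1 * I)) - (∫ x in s1..s2, g (x + t2 * I)) +
        I • (∫ y in t1..t2, g (s2 + y * I)) - I • (∫ y in t1..t2, g (s1 + y * I)) = 0 := by
    intro s1 s2 t1 t2 hsub
    have := Complex.integral_boundary_rect_eq_zero_of_differentiableOn g (s1 + t1 * I)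
      (s2 + t2 * I) (hg.mono (by simpa using hsub))
    simpa using this
  -- integrability of horizontal and vertical segments
  have hint_h : ∀ s1 s2 t : ℝ, (Set.uIcc s1 s2 ×ℂ Set.uIcc t t ⊆ Metric.ball c r) →
      IntervalIntegrable (fun x : ℝ => g (x + t * I)) MeasureTheory.volume s1 s2 := by
    intro s1 s2 t hsub
    apply ContinuousOn.intervalIntegrable
    refine (hgc.mono hsub).comp ?_ ?_
    · exact Continuous.continuousOn (by continuity)
    · intro x hx
      constructor <;> simp [hx]
  have hint_v : ∀ u t1 t2 : ℝ, (Set.uIcc u u ×ℂ Set.uIcc t1 t2 ⊆ Metric.ball c r) →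
      IntervalIntegrable (fun y : ℝ => g (u + y * I)) MeasureTheory.volume t1 t2 := by
    intro u t1 t2 hsub
    apply ContinuousOn.intervalIntegrable
    refine (hgc.mono hsub).comp ?_ ?_
    · exact Continuous.continuousOn (by continuity)
    · intro y hy
      constructor <;> simp [hy]
  refine ⟨fun w => (∫ x in c.re..w.re, g (x + c.im * I)) +
      I * ∫ y in c.im..w.im, g (w.re + y * I), fun w hw => ?_⟩
  rw [Metric.mem_ball, Complex.dist_eq] at hw
  set d := ‖w - c‖ with hd
  rw [hasDerivAt_iff_isLittleO, Asymptotics.isLittleO_iff]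
  intro C hC
  -- continuity of g at w
  have hgw : ContinuousAt g w := by
    have : Metric.ball c r ∈ nhds w := Metric.isOpen_ball.mem_nhds (by simpa [Complex.dist_eq])
    exact (hgc.continuousAt this)
  rcases Metric.continuousAt_iff.1 hgw (C / 2) (by linarith) with ⟨η₀, hη₀, hη⟩
  set η := min η₀ ((r - d) / 4) with hηdef
  have hηpos : 0 < η := by
    have : 0 < (r - d) / 4 := by linarith
    exact lt_min hη₀ this
  have hev : Metric.ball w (η / 2) ∈ nhds w := Metric.ball_mem_nhds _ (by linarith)
  filter_upwards [hev] with w' hw'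
  rw [Metric.mem_ball, Complex.dist_eq] at hw'
  set e := ‖w' - w‖ with he
  have he0 : 0 ≤ e := norm_nonneg _
  have heη : e < η / 2 := hw'
  have h2e : d + 2 * e < r := by
    have : η ≤ (r - d) / 4 := min_le_right _ _
    linarith
  have hre' : |w'.re - w.re| ≤ e := by simpa using Complex.abs_re_le_norm (w' - w)
  have him' : |w'.im - w.im| ≤ e := by simpa using Complex.abs_im_le_norm (w' - w)
  -- all rectangles with corners among c, w, w' are inside the ball
  have key : ∀ u1 u2 v1 v2 : ℝ, |u1 - c.re| ≤ |w.re - c.re| + e →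
      |u2 - c.re| ≤ |w.re - c.re| + e → |v1 - c.im| ≤ |w.im - c.im| + e →
      |v2 - c.im| ≤ |w.im - c.im| + e →
      Set.uIcc u1 u2 ×ℂ Set.uIcc v1 v2 ⊆ Metric.ball c r := by
    intro u1 u2 v1 v2 h1 h2 h3 h4 p hp
    rw [Complex.mem_reProdIm] at hp
    exact mem_ball_aux he0 h2e
      (le_trans (abs_sub_le_of_uIcc hp.1) (max_le h1 h2))
      (le_trans (abs_sub_le_of_uIcc hp.2) (max_le h3 h4))
  have ecre : |c.re - c.re| ≤ |w.re - c.re| + e := by simp [abs_nonneg]; positivity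
  have ecim : |c.im - c.im| ≤ |w.im - c.im| + e := by simp [abs_nonneg]; positivity
  have ewre : |w.re - c.re| ≤ |w.re - c.re| + e := by linarith
  have ewim : |w.im - c.im| ≤ |w.im - c.im| + e := by linarith
  have ew're : |w'.re - c.re| ≤ |w.re - c.re| + e := by
    have h1 := abs_sub_le w'.re w.re c.re
    linarith
  have ew'im : |w'.im - c.im| ≤ |w.im - c.im| + e := by
    have h1 := abs_sub_le w'.im w.im c.im
    linarith
  -- splitting of integrals
  have h1 : (∫ x in c.re..w'.re, g (x + c.im * I)) =
      (∫ x in c.re..w.re, g (x + c.im * I)) + ∫ x in w.re..w'.re, g (x + c.im * I) :=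
    (integral_add_adjacent_intervals
      (hint_h _ _ _ (key _ _ _ _ ecre ewre ecim ecim))
      (hint_h _ _ _ (key _ _ _ _ ewre ew're ecim ecim))).symm
  have h2 : (∫ y in c.im..w'.im, g (w'.re + y * I)) =
      (∫ y in c.im..w.im, g (w'.re + y * I)) + ∫ y in w.im..w'.im, g (w'.re + y * I) :=
    (integral_add_adjacent_intervals
      (hint_v _ _ _ (key _ _ _ _ ew're ew're ecim ewim))
      (hint_v _ _ _ (key _ _ _ _ ew're ew're ewim ew'im))).symm
  have hrectA := rect w.re w'.re c.im w.im (key _ _ _ _ ewre ew're ecim ewim)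
  rw [smul_eq_mul, smul_eq_mul] at hrectA
  have hww : (w' - w : ℂ) = ((w'.re - w.re : ℝ) : ℂ) + ((w'.im - w.im : ℝ) : ℂ) * I := by
    simp [Complex.ext_iff]
  have hdiff : ((∫ x in c.re..w'.re, g (x + c.im * I)) + I * ∫ y in c.im..w'.im, g (w'.re + y * I))
      - ((∫ x in c.re..w.re, g (x + c.im * I)) + I * ∫ y in c.im..w.im, g (w.re + y * I))
      - (w' - w) • g w
      = ((∫ x in w.re..w'.re, g (x + w.im * I)) - ((w'.re - w.re : ℝ) : ℂ) * g w)
        + I * ((∫ y in w.im..w'.im, g (w'.re + y * I)) - ((w'.im - w.im : ℝ) : ℂ) * g w) := by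
    rw [h1, h2, hww, smul_eq_mul]
    push_cast
    linear_combination hrectA
  simp only [hdiff]
  -- bound each piece
  have hb1 : ‖(∫ x in w.re..w'.re, g (x + w.im * I)) - ((w'.re - w.re : ℝ) : ℂ) * g w‖
      ≤ C / 2 * e := by
    have hi : IntervalIntegrable (fun x : ℝ => g (x + w.im * I)) MeasureTheory.volume w.re w'.re :=
      hint_h _ _ _ (key _ _ _ _ ewre ew're ewim ewim)
    have hconst : ((w'.re - w.re : ℝ) : ℂ) * g w = ∫ _x in w.re..w'.re, g w := by
      rw [intervalIntegral.integral_const, Complex.real_smul]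
    rw [hconst, ← intervalIntegral.integral_sub hi intervalIntegrable_const]
    have := intervalIntegral.norm_integral_le_of_norm_le_const (C := C / 2)
      (f := fun x : ℝ => g (x + w.im * I) - g w) (a := w.re) (b := w'.re) ?_
    · refine le_trans this ?_
      have : |w'.re - w.re| ≤ e := hre'
      have hC2 : 0 ≤ C / 2 := by linarith
      calc C / 2 * |w'.re - w.re| ≤ C / 2 * e := by
            exact mul_le_mul_of_nonneg_left this hC2
        _ = C / 2 * e := rfl
    · intro x hx
      have hx' : x ∈ Set.uIcc w.re w'.re := Set.uIoc_subset_uIcc hx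
      have hxb : |x - w.re| ≤ e := by
        have := abs_sub_le_of_uIcc (t := w.re) hx'
        simpa [abs_nonneg] using le_trans this (by simp [hre'])
      have hpt : (↑x + ↑w.im * I - w : ℂ) = ((x - w.re : ℝ) : ℂ) := by
        simp [Complex.ext_iff]
      have hdist : dist (↑x + ↑w.im * I : ℂ) w < η₀ := by
        rw [Complex.dist_eq, hpt, Complex.norm_real, Real.norm_eq_abs]
        have : η ≤ η₀ := min_le_left _ _
        linarith
      have := hη hdist
      rw [Complex.dist_eq] at this
      simpa using this.le
  have hb2 : ‖(∫ y in w.im..w'.im, g (w'.re + y * I)) - ((w'.im - w.im : ℝ) : ℂ) * g w‖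
      ≤ C / 2 * e := by
    have hi : IntervalIntegrable (fun y : ℝ => g (w'.re + y * I)) MeasureTheory.volume w.im w'.im :=
      hint_v _ _ _ (key _ _ _ _ ew're ew're ewim ew'im)
    have hconst : ((w'.im - w.im : ℝ) : ℂ) * g w = ∫ _y in w.im..w'.im, g w := by
      rw [intervalIntegral.integral_const, Complex.real_smul]
    rw [hconst, ← intervalIntegral.integral_sub hi intervalIntegrable_const]
    have := intervalIntegral.norm_integral_le_of_norm_le_const (C := C / 2)
      (f := fun y : ℝ => g (w'.re + y * I) - g w) (a := w.im) (b := w'.im) ?_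
    · refine le_trans this ?_
      have : |w'.im - w.im| ≤ e := him'
      have hC2 : 0 ≤ C / 2 := by linarith
      exact mul_le_mul_of_nonneg_left this hC2
    · intro y hy
      have hy' : y ∈ Set.uIcc w.im w'.im := Set.uIoc_subset_uIcc hy
      have hyb : |y - w.im| ≤ e := by
        have := abs_sub_le_of_uIcc (t := w.im) hy'
        simpa [abs_nonneg] using le_trans this (by simp [him'])
      have hdist : dist (↑w'.re + ↑y * I : ℂ) w < η₀ := by
        rw [Complex.dist_eq]
        have habs : ‖↑w'.re + ↑y * I - w‖ ≤ |w'.re - w.re| + |y - w.im| := by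
          have := Complex.norm_le_abs_re_add_abs_im (↑w'.re + ↑y * I - w)
          simpa using this
        have : η ≤ η₀ := min_le_left _ _
        linarith
      have := hη hdist
      rw [Complex.dist_eq] at this
      simpa using this.le
  calc ‖((∫ x in w.re..w'.re, g (x + w.im * I)) - ((w'.re - w.re : ℝ) : ℂ) * g w)
        + I * ((∫ y in w.im..w'.im, g (w'.re + y * I)) - ((w'.im - w.im : ℝ) : ℂ) * g w)‖
      ≤ ‖(∫ x in w.re..w'.re, g (x + w.im * I)) - ((w'.re - w.re : ℝ) : ℂ) * g w‖
        + ‖I * ((∫ y in w.im..w'.im, g (w'.re + y * I)) - ((w'.im - w.im : ℝ) : ℂ) * g w)‖ :=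
        norm_add_le _ _
    _ ≤ C / 2 * e + C / 2 * e := by
        rw [norm_mul]
        simp only [Complex.norm_I, one_mul]
        exact add_le_add (by simpa using hb1)
          (by simpa using hb2)
    _ = C * e := by ring
    _ ≤ C * ‖w' - w‖ := by
        exact le_rfl

lemma exists_log {c : ℂ} {r : ℝ} (hr : 0 < r) {F : ℂ → ℂ}
    (hF : DifferentiableOn ℂ F (Metric.ball c r))
    (hne : ∀ w ∈ Metric.ball c r, F w ≠ 0) :
    ∃ G : ℂ → ℂ, (∀ w ∈ Metric.ball c r, HasDerivAt G (deriv F w / F w) w) ∧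
      (∀ w ∈ Metric.ball c r, Complex.exp (G w) = F w) := by
  have hco : c ∈ Metric.ball c r := Metric.mem_ball_self hr
  have hd : DifferentiableOn ℂ (deriv F) (Metric.ball c r) :=
    ((hF.analyticOnNhd Metric.isOpen_ball).deriv).differentiableOn
  have hgd : DifferentiableOn ℂ (fun w => deriv F w / F w) (Metric.ball c r) :=
    hd.div hF hne
  obtain ⟨P, hP⟩ := exists_primitive hgd
  set G : ℂ → ℂ := fun w => P w - P c + Complex.log (F c) with hGdef
  have hG : ∀ w ∈ Metric.ball c r, HasDerivAt G (deriv F w / F w) w := fun w hw =>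
    ((hP w hw).sub_const (P c)).add_const _
  refine ⟨G, hG, ?_⟩
  set h : ℂ → ℂ := fun w => F w * Complex.exp (-G w) with hhdef
  have hGdiff : DifferentiableOn ℂ G (Metric.ball c r) := fun w hw =>
    ((hG w hw).differentiableAt.differentiableWithinAt)
  have hhderiv : ∀ w ∈ Metric.ball c r, HasDerivAt h 0 w := by
    intro w hw
    have h1 : HasDerivAt F (deriv F w) w :=
      (hF.differentiableAt (Metric.isOpen_ball.mem_nhds hw)).hasDerivAt
    have h2 : HasDerivAt (fun v => Complex.exp (-G v)) (-(deriv F w / F w) * Complex.exp (-G w)) w := by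
      have := ((hG w hw).neg).cexp
      simpa [mul_comm] using this
    have := h1.mul h2
    have key : F w * (deriv F w / F w) = deriv F w := by
      rw [← mul_div_assoc, mul_div_cancel_left₀ _ (hne w hw)]
    exact this.congr_deriv (by linear_combination (-Complex.exp (-G w)) * key)
  have hhdiff : DifferentiableOn ℂ h (Metric.ball c r) := fun w hw =>
    ((hhderiv w hw).differentiableAt.differentiableWithinAt)
  have hconst : ∀ w ∈ Metric.ball c r, h w = h c := by
    intro w hw
    refine (convex_ball c r).is_const_of_fderivWithin_eq_zero hhdiff ?_ hw hco
    intro x hx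
    rw [fderivWithin_of_isOpen Metric.isOpen_ball hx]
    have := (hhderiv x hx).hasFDerivAt.fderiv
    rw [this]
    ext v
    simp
  have hhc : h c = 1 := by
    have hGc : G c = Complex.log (F c) := by simp [hGdef]
    rw [hhdef]
    simp only [hGc, Complex.exp_neg, Complex.exp_log (hne c hco)]
    field_simp [hne c hco]
  intro w hw
  have := hconst w hw
  rw [hhc, hhdef] at this
  simp only at this
  have hexp := Complex.exp_ne_zero (G w)
  rw [Complex.exp_neg] at this
  field_simp at this
  rw [this]

lemma bc_center {s : ℂ} {ρ M : ℝ} (hρ : 0 < ρ) (hM : 0 < M) {H : ℂ → ℂ}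
    (hH : DifferentiableOn ℂ H (Metric.ball s ρ)) (hHs : H s = 0)
    (hRe : ∀ w ∈ Metric.ball s ρ, (H w).re < M) {h' : ℂ}
    (hder : HasDerivAt H h' s) : ‖h'‖ ≤ 2 * M / ρ := by
  set ψ : ℂ → ℂ := fun w => H w / (2 * M - H w) with hψdef
  have hden : ∀ w ∈ Metric.ball s ρ, (2 * M : ℂ) - H w ≠ 0 := by
    intro w hw h0
    have : ((2 * M : ℂ) - H w).re = 0 := by rw [h0]; simp
    simp only [Complex.sub_re, Complex.mul_re, Complex.re_ofNat, Complex.ofReal_re,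
      Complex.im_ofNat, Complex.ofReal_im] at this
    have := hRe w hw
    nlinarith
  have hmaps : ∀ w ∈ Metric.ball s ρ, ‖ψ w‖ < 1 := by
    intro w hw
    have h1 : Complex.normSq (H w) < Complex.normSq ((2 * M : ℂ) - H w) := by
      simp only [Complex.normSq_apply, Complex.sub_re, Complex.sub_im, Complex.mul_re,
        Complex.mul_im, Complex.re_ofNat, Complex.im_ofNat, Complex.ofReal_re, Complex.ofReal_im]
      have := hRe w hw
      nlinarith
    have h2 : ‖H w‖ < ‖(2 * M : ℂ) - H w‖ := by
      have := Real.sqrt_lt_sqrt (Complex.normSq_nonneg _) h1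
      simpa [Complex.norm_def] using this
    rw [hψdef]
    simp only [norm_div]
    rw [div_lt_one (lt_of_le_of_lt (norm_nonneg _) h2)]
    exact h2
  have hψs : ψ s = 0 := by simp [hψdef, hHs]
  have hψd : DifferentiableOn ℂ ψ (Metric.ball s ρ) :=
    hH.div ((differentiableOn_const _).sub hH) hden
  have hmapsTo : Set.MapsTo ψ (Metric.ball s ρ) (Metric.ball (ψ s) 1) := by
    intro w hw
    rw [Metric.mem_ball, hψs, Complex.dist_eq, sub_zero]
    exact hmaps w hw
  have hschwarz := Complex.norm_dslope_le_div_of_mapsTo_ball hψd (hmapsTo.mono_right Metric.ball_subset_closedBall)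
    (Metric.mem_ball_self hρ)
  rw [dslope_same] at hschwarz
  have hψder : HasDerivAt ψ (h' / (2 * M)) s := by
    have h2 : HasDerivAt (fun w => (2 * M : ℂ) - H w) (-h') s := by
      exact ((hasDerivAt_const s (2 * (M : ℂ))).sub hder).congr_deriv (zero_sub _)
    have hd := hder.div h2 (by simpa [hHs] using hden s (Metric.mem_ball_self hρ))
    refine hd.congr_deriv ?_
    symm
    rw [hHs]
    have h2M : ((2 * M : ℝ) : ℂ) ≠ 0 := by
      simp only [ne_eq, Complex.ofReal_eq_zero]
      positivity
    push_cast
    push_cast at h2M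
    have hM0 : (M : ℂ) ≠ 0 := by exact_mod_cast hM.ne'
    field_simp
    ring
  have hdψ : deriv ψ s = h' / (2 * M) := hψder.deriv
  rw [hdψ] at hschwarz
  have h2M : (0:ℝ) < 2 * M := by linarith
  rw [norm_div] at hschwarz
  have habs2M : ‖(2 * M : ℂ)‖ = 2 * M := by
    rw [show ((2 * M : ℂ)) = ((2 * M : ℝ) : ℂ) by push_cast; ring, Complex.norm_real, Real.norm_eq_abs,
      abs_of_pos h2M]
  rw [habs2M, div_le_div_iff₀ h2M hρ] at hschwarz
  rw [le_div_iff₀ hρ]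
  linarith

lemma bc_main {z : ℂ} {R δ U' : ℝ} (hR : 0 < R) (hδ : 0 < δ) (hU' : 0 < U')
    {H : ℂ → ℂ} (hH : DifferentiableOn ℂ H (Metric.ball z (R * (1 + δ))))
    (hHz : H z = 0) (hRe : ∀ w ∈ Metric.ball z (R * (1 + δ)), (H w).re < U')
    {s : ℂ} (hs : ‖s - z‖ ≤ R) {h' : ℂ} (hder : HasDerivAt H h' s) :
    ‖h'‖ ≤ 2 * (2 + δ) * U' / (R * δ ^ 2) := by
  have hR1 : 0 < R * (1 + δ) := by positivity
  have hsball : s ∈ Metric.ball z (R * (1 + δ)) := by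
    rw [Metric.mem_ball, Complex.dist_eq]
    nlinarith
  -- the Möbius transform of H
  set φ : ℂ → ℂ := fun w => H w / (2 * U' - H w) with hφdef
  have hden : ∀ w ∈ Metric.ball z (R * (1 + δ)), (2 * U' : ℂ) - H w ≠ 0 := by
    intro w hw h0
    have : ((2 * U' : ℂ) - H w).re = 0 := by rw [h0]; simp
    simp only [Complex.sub_re, Complex.mul_re, Complex.re_ofNat, Complex.ofReal_re,
      Complex.im_ofNat, Complex.ofReal_im] at this
    have := hRe w hw
    nlinarith
  have hmaps : ∀ w ∈ Metric.ball z (R * (1 + δ)), ‖φ w‖ < 1 := by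
    intro w hw
    have h1 : Complex.normSq (H w) < Complex.normSq ((2 * U' : ℂ) - H w) := by
      simp only [Complex.normSq_apply, Complex.sub_re, Complex.sub_im, Complex.mul_re,
        Complex.mul_im, Complex.re_ofNat, Complex.im_ofNat, Complex.ofReal_re, Complex.ofReal_im]
      have := hRe w hw
      nlinarith
    have h2 : ‖H w‖ < ‖(2 * U' : ℂ) - H w‖ := by
      have := Real.sqrt_lt_sqrt (Complex.normSq_nonneg _) h1
      simpa [Complex.norm_def] using this
    rw [hφdef]
    simp only [norm_div]
    rw [div_lt_one (lt_of_le_of_lt (norm_nonneg _) h2)]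
    exact h2
  have hφz : φ z = 0 := by simp [hφdef, hHz]
  have hφd : DifferentiableOn ℂ φ (Metric.ball z (R * (1 + δ))) :=
    hH.div ((differentiableOn_const _).sub hH) hden
  have hmapsTo : Set.MapsTo φ (Metric.ball z (R * (1 + δ))) (Metric.ball (φ z) 1) := by
    intro w hw
    rw [Metric.mem_ball, hφz, Complex.dist_eq, sub_zero]
    exact hmaps w hw
  -- Schwarz distance bound: |φ s| ≤ 1/(1+δ)
  have hdist := Complex.dist_le_div_mul_dist_of_mapsTo_ball hφd (hmapsTo.mono_right Metric.ball_subset_closedBall) hsball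
  rw [hφz, Complex.dist_eq, Complex.dist_eq, sub_zero] at hdist
  have hφs : ‖φ s‖ ≤ 1 / (1 + δ) := by
    have : 1 / (R * (1 + δ)) * ‖s - z‖ ≤ 1 / (R * (1 + δ)) * R := by
      apply mul_le_mul_of_nonneg_left hs
      positivity
    calc ‖φ s‖ ≤ 1 / (R * (1 + δ)) * ‖s - z‖ := hdist
      _ ≤ 1 / (R * (1 + δ)) * R := this
      _ = 1 / (1 + δ) := by field_simp
  -- |H s| ≤ 2U'/δ
  have hHsb : ‖H s‖ ≤ 2 * U' / δ := by
    have hid : H s * (1 + φ s) = 2 * U' * φ s := by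
      rw [hφdef]
      have hd := hden s hsball
      field_simp
      ring
    have h1 : ‖1 + φ s‖ ≥ δ / (1 + δ) := by
      have : ‖1 + φ s‖ ≥ 1 - ‖φ s‖ := by
        have := norm_add_le (1 + φ s) (-φ s)
        simp only [add_neg_cancel_right, norm_neg] at this
        simpa using this
      have h2 : 1 - ‖φ s‖ ≥ 1 - 1 / (1 + δ) := by linarith
      have h3 : 1 - 1 / (1 + δ) = δ / (1 + δ) := by field_simp; ring
      linarith
    have habs : ‖H s‖ * ‖1 + φ s‖ = 2 * U' * ‖φ s‖ := by
      rw [← norm_mul, hid, norm_mul]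
      congr 1
      rw [show ((2 * U' : ℂ)) = ((2 * U' : ℝ) : ℂ) by push_cast; ring, Complex.norm_real, Real.norm_eq_abs,
        abs_of_pos (by linarith)]
    have hφnn : ‖φ s‖ ≤ 1 / (1 + δ) := hφs
    have hHnn : 0 ≤ ‖H s‖ := norm_nonneg _
    have step : ‖H s‖ * (δ / (1 + δ)) ≤ 2 * U' * (1 / (1 + δ)) := by
      calc ‖H s‖ * (δ / (1 + δ)) ≤ ‖H s‖ * ‖1 + φ s‖ :=
            mul_le_mul_of_nonneg_left h1 hHnn
        _ = 2 * U' * ‖φ s‖ := habs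
        _ ≤ 2 * U' * (1 / (1 + δ)) := mul_le_mul_of_nonneg_left hφnn (by linarith)
    have h1δ : (0:ℝ) < 1 + δ := by linarith
    rw [le_div_iff₀ hδ]
    have step2 := mul_le_mul_of_nonneg_right step h1δ.le
    have e1 : ‖H s‖ * (δ / (1 + δ)) * (1 + δ) = ‖H s‖ * δ := by
      field_simp
    have e2 : 2 * U' * (1 / (1 + δ)) * (1 + δ) = 2 * U' := by field_simp
    linarith
  -- now apply bc_center on ball s (R * δ)
  have hsub : Metric.ball s (R * δ) ⊆ Metric.ball z (R * (1 + δ)) := by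
    intro w hw
    rw [Metric.mem_ball, Complex.dist_eq] at hw ⊢
    calc ‖w - z‖ ≤ ‖w - s‖ + ‖s - z‖ := by
          simpa using norm_add_le (w - s) (s - z)
      _ < R * δ + R := by linarith
      _ = R * (1 + δ) := by ring
  set M : ℝ := U' * (2 + δ) / δ with hMdef
  have hM : 0 < M := by positivity
  have hK := bc_center (s := s) (ρ := R * δ) (M := M) (by positivity) hM
    (H := fun w => H w - H s) ((hH.mono hsub).sub_const _) (by simp)
    (fun w hw => ?_) (hder.sub_const _)
  · calc ‖h'‖ ≤ 2 * M / (R * δ) := hK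
      _ = 2 * (2 + δ) * U' / (R * δ ^ 2) := by
        rw [hMdef]; field_simp
  · have hw' := hsub hw
    have h1 := hRe w hw'
    have h2 : (H s).re ≥ -(2 * U' / δ) := by
      have := Complex.abs_re_le_norm (H s)
      have := neg_abs_le (H s).re
      linarith [hHsb]
    simp only [Complex.sub_re]
    rw [hMdef]
    have : U' + 2 * U' / δ = U' * (2 + δ) / δ := by field_simp; ring
    linarith



/-- Bound for logarithmic derivatives of holomorphic functions: let `F` be holomorphic
on an open set containing the closed disk `Δ = {s : |s − z| ≤ R(1+δ)³}`, with no zeros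
on `{s : |s − z| ≤ R(1+δ)², Re(s) > Re(z) − R(1+δ)}`, and suppose
`log|F(s)| ≤ U + log|F(z)|` on `Δ`. Then for each `s` with `|s − z| ≤ R`,
`|F′(s)/F(s)| ≤ ((2+δ)/δ)·(|F′(z)/F(z)| + ((2 + (1+δ)⁻²)(1+δ)/(Rδ²))·U)`. -/
theorem log_deriv_bound (z : ℂ) (R δ U : ℝ) (hR : 0 < R) (hδ : 0 < δ) (hU : 0 ≤ U)
    (F : ℂ → ℂ)
    (hF : ∃ O : Set ℂ, IsOpen O ∧ Metric.closedBall z (R * (1 + δ) ^ 3) ⊆ O ∧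
      DifferentiableOn ℂ F O)
    (hzero : ∀ s : ℂ, ‖s - z‖ ≤ R * (1 + δ) ^ 2 →
      z.re - R * (1 + δ) < s.re → F s ≠ 0)
    (hbound : ∀ s : ℂ, ‖s - z‖ ≤ R * (1 + δ) ^ 3 →
      Real.log (‖F s‖) ≤ U + Real.log (‖F z‖)) :
    ∀ s : ℂ, ‖s - z‖ ≤ R →
      ‖deriv F s / F s‖ ≤
        ((2 + δ) / δ) * (‖deriv F z / F z‖ +
          ((2 + ((1 + δ) ^ 2)⁻¹) * (1 + δ) / (R * δ ^ 2)) * U) := by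
  intro s hs
  obtain ⟨O, hO, hOsub, hFd⟩ := hF
  have h1δ : (0:ℝ) < 1 + δ := by linarith
  have hR1 : 0 < R * (1 + δ) := by positivity
  have hq0 : R < R * (1 + δ) := by nlinarith [mul_pos hR hδ]
  have hq2 : R * (1 + δ) ≤ R * (1 + δ) ^ 2 := by
    nlinarith [mul_nonneg (mul_nonneg hR.le h1δ.le) hδ.le]
  have hq3 : R * (1 + δ) ≤ R * (1 + δ) ^ 3 := by
    nlinarith [mul_nonneg (mul_nonneg hR.le h1δ.le) (show (0:ℝ) ≤ 2 * δ + δ ^ 2 by nlinarith)]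
  set B := Metric.ball z (R * (1 + δ)) with hBdef
  have hsubO : B ⊆ O := by
    intro w hw
    apply hOsub
    rw [Metric.mem_closedBall, Complex.dist_eq]
    rw [hBdef, Metric.mem_ball, Complex.dist_eq] at hw
    linarith
  have hFB : DifferentiableOn ℂ F B := hFd.mono hsubO
  have hne : ∀ w ∈ B, F w ≠ 0 := by
    intro w hw
    rw [hBdef, Metric.mem_ball, Complex.dist_eq] at hw
    apply hzero
    · linarith
    · have h1 := Complex.abs_im_le_norm (w - z)
      have h2 := Complex.abs_re_le_norm (w - z)
      have h3 := neg_abs_le (w - z).re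
      simp only [Complex.sub_re] at h2 h3
      linarith
  obtain ⟨G, hGder, hGexp⟩ := exists_log hR1 hFB hne
  have hzB : z ∈ B := Metric.mem_ball_self hR1
  have hReG : ∀ w ∈ B, (G w).re ≤ U + (G z).re := by
    intro w hw
    have h1 : Real.log (‖F w‖) = (G w).re := by
      rw [← hGexp w hw, Complex.norm_exp, Real.log_exp]
    have h2 : Real.log (‖F z‖) = (G z).re := by
      rw [← hGexp z hzB, Complex.norm_exp, Real.log_exp]
    have h3 : ‖w - z‖ ≤ R * (1 + δ) ^ 3 := by
      rw [hBdef, Metric.mem_ball, Complex.dist_eq] at hw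
      linarith
    have := hbound w h3
    rw [h1, h2] at this
    exact this
  have hsB : s ∈ B := by
    rw [hBdef, Metric.mem_ball, Complex.dist_eq]
    linarith
  have hds : HasDerivAt (fun w => G w - G z) (deriv F s / F s) s := (hGder s hsB).sub_const _
  have main : ∀ ε : ℝ, 0 < ε →
      ‖deriv F s / F s‖ ≤ 2 * (2 + δ) * (U + ε) / (R * δ ^ 2) := by
    intro ε hε
    refine bc_main hR hδ (by linarith : (0:ℝ) < U + ε)
      (H := fun w => G w - G z)
      (fun w hw => ((hGder w hw).sub_const _).differentiableAt.differentiableWithinAt)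
      (by simp) ?_ hs hds
    intro w hw
    have := hReG w hw
    simp only [Complex.sub_re]
    linarith
  -- final arithmetic
  have hA : 0 ≤ ‖deriv F z / F z‖ := norm_nonneg _
  have ht : 0 < ((1 + δ) ^ 2)⁻¹ := by positivity
  have hkey : 2 * (2 + δ) / (R * δ ^ 2) ≤
      (2 + δ) / δ * ((2 + ((1 + δ) ^ 2)⁻¹) * (1 + δ) / (R * δ ^ 2)) := by
    have hstep : 2 * δ ≤ (2 + ((1 + δ) ^ 2)⁻¹) * (1 + δ) := by
      nlinarith [mul_pos ht h1δ]
    rw [div_mul_div_comm, div_le_div_iff₀ (by positivity) (by positivity)]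
    nlinarith [mul_le_mul_of_nonneg_left hstep
      (show (0:ℝ) ≤ (2 + δ) * (R * δ ^ 2) by positivity)]
  refine le_of_forall_pos_le_add ?_
  intro ε' hε'
  set ε : ℝ := ε' * (R * δ ^ 2) / (2 * (2 + δ)) with hεdef
  have hεpos : 0 < ε := by positivity
  have h1 := main ε hεpos
  have hsplit : 2 * (2 + δ) * (U + ε) / (R * δ ^ 2) =
      2 * (2 + δ) * U / (R * δ ^ 2) + 2 * (2 + δ) * ε / (R * δ ^ 2) := by ring
  have hεeq : 2 * (2 + δ) * ε / (R * δ ^ 2) = ε' := by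
    rw [hεdef]; field_simp
  have hU1 : 2 * (2 + δ) * U / (R * δ ^ 2) ≤
      (2 + δ) / δ * ((2 + ((1 + δ) ^ 2)⁻¹) * (1 + δ) / (R * δ ^ 2)) * U := by
    have := mul_le_mul_of_nonneg_right hkey hU
    calc 2 * (2 + δ) * U / (R * δ ^ 2) = 2 * (2 + δ) / (R * δ ^ 2) * U := by ring
      _ ≤ (2 + δ) / δ * ((2 + ((1 + δ) ^ 2)⁻¹) * (1 + δ) / (R * δ ^ 2)) * U := this
  have hfin : (2 + δ) / δ * ((2 + ((1 + δ) ^ 2)⁻¹) * (1 + δ) / (R * δ ^ 2)) * U ≤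
      (2 + δ) / δ * (‖deriv F z / F z‖ +
        (2 + ((1 + δ) ^ 2)⁻¹) * (1 + δ) / (R * δ ^ 2) * U) := by
    have hc : (0:ℝ) ≤ (2 + δ) / δ := by positivity
    nlinarith
  rw [hsplit, hεeq] at h1
  linarith
end

section
/- Let δ₁ < δ₂ be real numbers and let h be a complex-valued function holomorphic on an open set containing the closed strip {s ∈ ℂ : δ₁ ≤ Re(s) ≤ δ₂}. Assume that: (i) for each σ > 0 there exist real numbers C_σ > 0 and T_σ > 0 such that |h(δ + it)| ≤ C_σ·e^{σ|t|} for all real δ, t with δ₁ ≤ δ ≤ δ₂ and |t| ≥ T_σ; (ii) there exist real numbers C₀ > 0, T₀ > 0, and k₁, k₂ ∈ ℝ such that |h(δ₁ + it)| ≤ C₀·|t|^{k₁} and |h(δ₂ + it)| ≤ C₀·|t|^{k₂} for all real t with |t| ≥ T₀. Then there exist real numbers C > 0 and T > 0 such that |h(δ + it)| ≤ C·|t|^{k(δ)} for all real δ, t with δ₁ ≤ δ ≤ δ₂ and |t| ≥ T, where k(δ) := k₁ + (k₂ − k₁)(δ − δ₁)/(δ₂ − δ₁) is the linear function of δ taking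 the values k₁ and k₂ at δ = δ₁ and δ = δ₂, respectively. -/
open Complex Real Set Filter Asymptotics
set_option maxHeartbeats 1000000

lemma plAux_arg' {u : ℂ} (hu : 0 < u.re) : |u.arg| ≤ (π/2) * (|u.im| / u.re) := by
  have h1 : |u.arg| ≤ π/2 := Complex.abs_arg_le_pi_div_two_iff.mpr hu.le
  have hune : u ≠ 0 := fun h => by simp [h] at hu
  have habs : 0 < ‖u‖ := norm_pos_iff.mpr hune
  have hπ : 0 < π := Real.pi_pos
  have h2 : 2/π * |u.arg| ≤ Real.sin |u.arg| := Real.mul_le_sin (abs_nonneg _) h1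
  have h3 : Real.sin |u.arg| = |Real.sin u.arg| := by
    rcases le_or_gt 0 u.arg with h | h
    · rw [_root_.abs_of_nonneg h, _root_.abs_of_nonneg]
      exact Real.sin_nonneg_of_nonneg_of_le_pi h (le_trans (le_abs_self _) (h1.trans (by linarith)))
    · have hs : Real.sin u.arg ≤ 0 := by
        have h6 : -u.arg ≤ π := le_trans (le_trans (neg_le_abs _) h1) (by linarith)
        have h7 := Real.sin_nonneg_of_nonneg_of_le_pi (by linarith : (0:ℝ) ≤ -u.arg) h6
        rw [Real.sin_neg] at h7; linarith
      rw [_root_.abs_of_neg h, Real.sin_neg, _root_.abs_of_nonpos hs]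
  have h4 : |Real.sin u.arg| = |u.im| / ‖u‖ := by
    rw [Complex.sin_arg, abs_div, _root_.abs_of_pos habs]
  have h5 : |u.im| / ‖u‖ ≤ |u.im| / u.re :=
    div_le_div_of_nonneg_left (abs_nonneg _) hu (Complex.re_le_norm u)
  have key : 2/π * |u.arg| ≤ |u.im| / u.re := by rw [h3, h4] at h2; exact h2.trans h5
  calc |u.arg| = (π/2) * (2/π * |u.arg|) := by field_simp
    _ ≤ (π/2) * (|u.im| / u.re) := mul_le_mul_of_nonneg_left key (by positivity)

lemma plAux_rpow {v t k κ K : ℝ} (hK : 1 ≤ K) (hk : |k| ≤ κ) (ht : 1 ≤ |t|)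
    (h1 : t^2 ≤ v) (h2 : v ≤ K * t^2) : v ^ (k/2) ≤ K^(κ/2) * |t| ^ k := by
  have ht2 : (0:ℝ) < t^2 := by nlinarith [_root_.sq_abs t]
  have hv : 0 < v := lt_of_lt_of_le ht2 h1
  have hκ : 0 ≤ κ := le_trans (abs_nonneg _) hk
  have hteq : (t^2 : ℝ) ^ (k/2) = |t| ^ k := by
    rw [← _root_.sq_abs, ← Real.rpow_natCast |t| 2, ← Real.rpow_mul (abs_nonneg t)]
    congr 1
    ring
  rcases le_or_gt 0 k with h | h
  · calc v ^ (k/2) ≤ (K * t^2) ^ (k/2) := Real.rpow_le_rpow hv.le h2 (by linarith)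
      _ = K^(k/2) * (t^2)^(k/2) := Real.mul_rpow (by linarith) ht2.le
      _ ≤ K^(κ/2) * |t| ^ k := by
          rw [hteq]
          have : K^(k/2) ≤ K^(κ/2) := Real.rpow_le_rpow_of_exponent_le hK
            (by linarith [le_trans (le_abs_self k) hk])
          exact mul_le_mul_of_nonneg_right this (Real.rpow_nonneg (abs_nonneg t) k)
  · calc v ^ (k/2) ≤ (t^2) ^ (k/2) := Real.rpow_le_rpow_of_nonpos ht2 h1 (by linarith)
      _ = |t| ^ k := hteq
      _ ≤ K^(κ/2) * |t| ^ k := by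
          nlinarith [Real.one_le_rpow hK (by positivity : (0:ℝ) ≤ κ/2),
            Real.rpow_nonneg (abs_nonneg t) k]

lemma plAux_u_re' (R δ t : ℝ) : ((R:ℂ)^2 - ((δ:ℂ)+(t:ℂ)*Complex.I)^2).re = R^2 - δ^2 + t^2 := by
  simp [pow_two, Complex.mul_re, Complex.add_re, Complex.add_im, Complex.sub_re]
  ring

lemma plAux_u_im' (R δ t : ℝ) : ((R:ℂ)^2 - ((δ:ℂ)+(t:ℂ)*Complex.I)^2).im = -(2*δ*t) := by
  simp [pow_two, Complex.mul_im, Complex.add_re, Complex.add_im, Complex.sub_im]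
  ring

lemma plAux_gnorm (a2 b2 R δ t : ℝ) (h : ℂ → ℂ) :
    ‖h ((δ:ℂ)+(t:ℂ)*Complex.I) *
      Complex.exp (-(((a2:ℂ)+(b2:ℂ)*((δ:ℂ)+(t:ℂ)*Complex.I)) *
        Complex.log ((R:ℂ)^2 - ((δ:ℂ)+(t:ℂ)*Complex.I)^2)))‖ =
    ‖h ((δ:ℂ)+(t:ℂ)*Complex.I)‖ *
      Real.exp (-((a2+b2*δ) * Real.log (‖(R:ℂ)^2 - ((δ:ℂ)+(t:ℂ)*Complex.I)^2‖)
        - b2*t * ((R:ℂ)^2 - ((δ:ℂ)+(t:ℂ)*Complex.I)^2).arg)) := by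
  rw [norm_mul, Complex.norm_exp]
  congr 2
  simp [Complex.mul_re, Complex.add_re, Complex.add_im, Complex.mul_im,
    Complex.log_re, Complex.log_im]

lemma plAux_ubounds (D R K δ t : ℝ) (hR : R = D + 2) (hK : K = 1 + R^2 + 2*D) (hδD : |δ| ≤ D) :
    0 < ((R:ℂ)^2 - ((δ:ℂ)+(t:ℂ)*Complex.I)^2).re ∧
    t^2 ≤ ‖(R:ℂ)^2 - ((δ:ℂ)+(t:ℂ)*Complex.I)^2‖ ∧
    (1 ≤ |t| → ‖(R:ℂ)^2 - ((δ:ℂ)+(t:ℂ)*Complex.I)^2‖ ≤ K * t^2) := by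
  have hD0 : 0 ≤ D := le_trans (abs_nonneg δ) hδD
  have hδ2 : δ^2 ≤ D^2 := by nlinarith [_root_.sq_abs δ, abs_nonneg δ]
  have hre := plAux_u_re' R δ t
  have him := plAux_u_im' R δ t
  have h1 : 0 < ((R:ℂ)^2 - ((δ:ℂ)+(t:ℂ)*Complex.I)^2).re := by
    rw [hre]; nlinarith [sq_nonneg t]
  refine ⟨h1, ?_, ?_⟩
  · calc t^2 ≤ ((R:ℂ)^2 - ((δ:ℂ)+(t:ℂ)*Complex.I)^2).re := by rw [hre]; nlinarith
      _ ≤ ‖_‖ := Complex.re_le_norm _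
  · intro ht1
    have ht2 : 1 ≤ t^2 := by nlinarith [_root_.sq_abs t]
    calc ‖(R:ℂ)^2 - ((δ:ℂ)+(t:ℂ)*Complex.I)^2‖
        ≤ |((R:ℂ)^2 - ((δ:ℂ)+(t:ℂ)*Complex.I)^2).re| +
          |((R:ℂ)^2 - ((δ:ℂ)+(t:ℂ)*Complex.I)^2).im| := Complex.norm_le_abs_re_add_abs_im _
      _ ≤ K * t^2 := by
          rw [hre, him, _root_.abs_of_pos (hre ▸ h1), abs_neg, abs_mul, abs_mul]
          norm_num
          have h2 : |δ| * |t| ≤ D * t^2 := by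
            nlinarith [mul_le_mul_of_nonneg_right hδD (abs_nonneg t), _root_.sq_abs t,
              mul_nonneg (abs_nonneg t) (sub_nonneg.mpr ht1), hD0]
          nlinarith [h2, sq_nonneg δ, mul_nonneg (sq_nonneg R) (sub_nonneg.mpr ht2)]

lemma plAux_argbd (D R b2 δ t : ℝ) (hR : R = D + 2) (hδD : |δ| ≤ D) :
    |b2 * t * ((R:ℂ)^2 - ((δ:ℂ)+(t:ℂ)*Complex.I)^2).arg| ≤ π * |b2| * D := by
  have hD0 : 0 ≤ D := le_trans (abs_nonneg δ) hδD
  have hδ2 : δ^2 ≤ D^2 := by nlinarith [_root_.sq_abs δ, abs_nonneg δ]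
  have hre := plAux_u_re' R δ t
  have him := plAux_u_im' R δ t
  have hπ : 0 < π := Real.pi_pos
  set u : ℂ := (R:ℂ)^2 - ((δ:ℂ)+(t:ℂ)*Complex.I)^2 with hu
  have h1 : 0 < u.re := by rw [hre]; nlinarith [sq_nonneg t]
  have harg := plAux_arg' h1
  have himabs : |u.im| = 2 * ( |δ| * |t| ) := by
    rw [him, abs_neg, abs_mul, abs_mul]
    norm_num
    ring
  calc |b2 * t * u.arg| = |b2| * ( |t| * |u.arg| ) := by rw [abs_mul, abs_mul]; ring
    _ ≤ |b2| * ( |t| * ((π/2) * (|u.im| / u.re)) ) := by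
        apply mul_le_mul_of_nonneg_left _ (abs_nonneg b2)
        exact mul_le_mul_of_nonneg_left harg (abs_nonneg t)
    _ = (π * |b2|) * (( |t| * |t| ) * |δ| / u.re) := by rw [himabs]; ring
    _ ≤ (π * |b2|) * D := by
        apply mul_le_mul_of_nonneg_left _ (by positivity)
        rw [div_le_iff₀ h1, hre]
        nlinarith [_root_.sq_abs t, mul_nonneg (sq_nonneg t) (sub_nonneg.mpr hδD),
          mul_nonneg hD0 (by nlinarith : (0:ℝ) ≤ R^2 - δ^2)]
    _ = π * |b2| * D := by ring

/-- The Phragmén–Lindelöf theorem: let `h` be holomorphic on an open set containing the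
closed strip `{s : δ₁ ≤ Re(s) ≤ δ₂}`. Assume (i) for each `σ > 0` there are `C_σ, T_σ > 0`
with `|h(δ + it)| ≤ C_σ·e^{σ|t|}` for `δ₁ ≤ δ ≤ δ₂`, `|t| ≥ T_σ`; and (ii) there are
`C₀, T₀ > 0` with `|h(δ₁ + it)| ≤ C₀·|t|^{k₁}` and `|h(δ₂ + it)| ≤ C₀·|t|^{k₂}` for
`|t| ≥ T₀`. Then there are `C, T > 0` with `|h(δ + it)| ≤ C·|t|^{k(δ)}` for
`δ₁ ≤ δ ≤ δ₂` and `|t| ≥ T`, where `k(δ) = k₁ + (k₂ − k₁)(δ − δ₁)/(δ₂ − δ₁)` is the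
linear function with `k(δ₁) = k₁` and `k(δ₂) = k₂`. -/
theorem phragmen_lindelof_strip (δ₁ δ₂ : ℝ) (hδ : δ₁ < δ₂) (k₁ k₂ : ℝ) (h : ℂ → ℂ)
    (hhol : ∃ O : Set ℂ, IsOpen O ∧ {s : ℂ | δ₁ ≤ s.re ∧ s.re ≤ δ₂} ⊆ O ∧
      DifferentiableOn ℂ h O)
    (hi : ∀ σ : ℝ, 0 < σ → ∃ Cσ Tσ : ℝ, 0 < Cσ ∧ 0 < Tσ ∧
      ∀ δ t : ℝ, δ₁ ≤ δ → δ ≤ δ₂ → Tσ ≤ |t| →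
        ‖h (↑δ + ↑t * Complex.I)‖ ≤ Cσ * Real.exp (σ * |t|))
    (hii : ∃ C₀ T₀ : ℝ, 0 < C₀ ∧ 0 < T₀ ∧
      ∀ t : ℝ, T₀ ≤ |t| →
        ‖h (↑δ₁ + ↑t * Complex.I)‖ ≤ C₀ * |t| ^ k₁ ∧
        ‖h (↑δ₂ + ↑t * Complex.I)‖ ≤ C₀ * |t| ^ k₂) :
    ∃ C T : ℝ, 0 < C ∧ 0 < T ∧
      ∀ δ t : ℝ, δ₁ ≤ δ → δ ≤ δ₂ → T ≤ |t| →
        ‖h (↑δ + ↑t * Complex.I)‖ ≤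
          C * |t| ^ (k₁ + (k₂ - k₁) * (δ - δ₁) / (δ₂ - δ₁)) := by
  obtain ⟨O, hO, hOsub, hhO⟩ := hhol
  obtain ⟨C₀, T₀, hC₀, hT₀, hbd⟩ := hii
  have hδne : δ₂ - δ₁ ≠ 0 := sub_ne_zero.mpr hδ.ne'
  set D : ℝ := max |δ₁| |δ₂| with hD
  have hDδ₁ : |δ₁| ≤ D := by rw [hD]; exact le_max_left _ _
  have hDδ₂ : |δ₂| ≤ D := by rw [hD]; exact le_max_right _ _
  have hD0 : 0 ≤ D := le_trans (abs_nonneg δ₁) hDδ₁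
  have hDδ : ∀ δ : ℝ, δ₁ ≤ δ → δ ≤ δ₂ → |δ| ≤ D := by
    intro δ h1 h2
    rw [abs_le]
    constructor
    · have := neg_abs_le δ₁; linarith
    · have := le_abs_self δ₂; linarith
  set R : ℝ := D + 2 with hR
  set K : ℝ := 1 + R^2 + 2*D with hK
  have hK1 : 1 ≤ K := by rw [hK]; nlinarith [sq_nonneg R]
  have hK0 : 0 < K := lt_of_lt_of_le one_pos hK1
  set κ : ℝ := max |k₁| |k₂| with hκdef
  have hκ1 : |k₁| ≤ κ := by rw [hκdef]; exact le_max_left _ _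
  have hκ2 : |k₂| ≤ κ := by rw [hκdef]; exact le_max_right _ _
  have hκ0 : 0 ≤ κ := le_trans (abs_nonneg k₁) hκ1
  set bb : ℝ := (k₂ - k₁)/(δ₂ - δ₁) with hbb
  set aa : ℝ := k₁ - bb*δ₁ with haa
  set a2 : ℝ := aa/2 with ha2
  set b2 : ℝ := bb/2 with hb2
  have hbbmul : bb * (δ₂ - δ₁) = k₂ - k₁ := by rw [hbb]; field_simp
  have hexpeq : ∀ δ : ℝ, k₁ + (k₂ - k₁) * (δ - δ₁) / (δ₂ - δ₁) = aa + bb*δ := by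
    intro δ; rw [haa, hbb]; field_simp; ring
  have hkκ : ∀ δ : ℝ, δ₁ ≤ δ → δ ≤ δ₂ → |aa + bb*δ| ≤ κ := by
    intro δ h1 h2
    have e1 : aa + bb*δ = k₁ + bb*(δ - δ₁) := by rw [haa]; ring
    rw [abs_le]
    rcases le_or_gt 0 bb with hb | hb
    · constructor
      · nlinarith [neg_abs_le k₁, mul_nonneg hb (sub_nonneg.mpr h1), hbbmul]
      · nlinarith [le_abs_self k₂, mul_nonneg hb (sub_nonneg.mpr h2), hbbmul]
    · constructor
      · nlinarith [neg_abs_le k₂, mul_nonneg (neg_nonneg.mpr hb.le) (sub_nonneg.mpr h2), hbbmul]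
      · nlinarith [le_abs_self k₁, mul_nonneg (neg_nonneg.mpr hb.le) (sub_nonneg.mpr h1), hbbmul]
  set Eb : ℝ := π * |b2| * D + 1 with hEb
  have hEb0 : 0 < Eb := by
    have := Real.pi_pos
    have h1 : 0 ≤ π * |b2| * D := by positivity
    rw [hEb]; linarith
  have hargbd : ∀ δ t : ℝ, |δ| ≤ D →
      |b2 * t * ((R:ℂ)^2 - ((δ:ℂ)+(t:ℂ)*Complex.I)^2).arg| ≤ Eb := by
    intro δ t hδD
    have h1 := plAux_argbd D R b2 δ t hR hδD
    rw [hEb]; linarith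
  set g : ℂ → ℂ := fun z => h z *
    Complex.exp (-(((a2:ℂ) + (b2:ℂ)*z) * Complex.log ((R:ℂ)^2 - z^2))) with hg
  have hgnorm : ∀ δ t : ℝ, ‖g ((δ:ℂ)+(t:ℂ)*Complex.I)‖ =
      ‖h ((δ:ℂ)+(t:ℂ)*Complex.I)‖ *
      Real.exp (-((a2+b2*δ) * Real.log (‖(R:ℂ)^2 - ((δ:ℂ)+(t:ℂ)*Complex.I)^2‖)
        - b2*t * ((R:ℂ)^2 - ((δ:ℂ)+(t:ℂ)*Complex.I)^2).arg)) := by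
    intro δ t
    simp only [hg]
    exact plAux_gnorm a2 b2 R δ t h
  clear_value D R K κ bb aa a2 b2 Eb g
  -- the master exponential estimate
  have hEXP : ∀ δ t kk : ℝ, |δ| ≤ D → 1 ≤ |t| → a2 + b2*δ = kk/2 → |kk| ≤ κ →
      Real.exp (-((a2+b2*δ) * Real.log (‖(R:ℂ)^2 - ((δ:ℂ)+(t:ℂ)*Complex.I)^2‖)
        - b2*t * ((R:ℂ)^2 - ((δ:ℂ)+(t:ℂ)*Complex.I)^2).arg))
      ≤ Real.exp Eb * (K^(κ/2) * |t| ^ (-kk)) := by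
    intro δ t kk hδD ht1 hkk hkκ'
    obtain ⟨hupos, hvlow, hvup⟩ := plAux_ubounds D R K δ t hR hK hδD
    have ht0' : (0:ℝ) < |t| := lt_of_lt_of_le one_pos ht1
    have ht2 : (0:ℝ) < t^2 := by rw [← _root_.sq_abs]; exact pow_pos ht0' 2
    have hv0 : 0 < ‖(R:ℂ)^2 - ((δ:ℂ)+(t:ℂ)*Complex.I)^2‖ := lt_of_lt_of_le ht2 hvlow
    have harg := hargbd δ t hδD
    have h1 : -((a2+b2*δ) * Real.log (‖(R:ℂ)^2 - ((δ:ℂ)+(t:ℂ)*Complex.I)^2‖)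
        - b2*t * ((R:ℂ)^2 - ((δ:ℂ)+(t:ℂ)*Complex.I)^2).arg)
        ≤ Eb + Real.log (‖(R:ℂ)^2 - ((δ:ℂ)+(t:ℂ)*Complex.I)^2‖) * ((-kk)/2) := by
      have h2 := le_trans (le_abs_self _) harg
      rw [hkk]
      linarith
    calc Real.exp (-((a2+b2*δ) * Real.log (‖(R:ℂ)^2 - ((δ:ℂ)+(t:ℂ)*Complex.I)^2‖)
          - b2*t * ((R:ℂ)^2 - ((δ:ℂ)+(t:ℂ)*Complex.I)^2).arg))
        ≤ Real.exp (Eb + Real.log (‖(R:ℂ)^2 - ((δ:ℂ)+(t:ℂ)*Complex.I)^2‖) * ((-kk)/2)) :=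
          Real.exp_le_exp.mpr h1
      _ = Real.exp Eb * (‖(R:ℂ)^2 - ((δ:ℂ)+(t:ℂ)*Complex.I)^2‖) ^ ((-kk)/2) := by
          rw [Real.exp_add, Real.rpow_def_of_pos hv0]
      _ ≤ Real.exp Eb * (K^(κ/2) * |t| ^ (-kk)) := by
          apply mul_le_mul_of_nonneg_left _ (Real.exp_nonneg _)
          exact plAux_rpow hK1 (by rw [abs_neg]; exact hkκ') ht1 hvlow (hvup ht1)
  -- differentiability
  set O' : Set ℂ := O ∩ (Complex.re ⁻¹' Ioo (δ₁-1) (δ₂+1)) with hO'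
  have hO'open : IsOpen O' := by
    rw [hO']; exact hO.inter (isOpen_Ioo.preimage Complex.continuous_re)
  have hstripO' : {s : ℂ | δ₁ ≤ s.re ∧ s.re ≤ δ₂} ⊆ O' := by
    intro z hz
    rw [hO']
    refine ⟨hOsub hz, ?_⟩
    simp only [mem_preimage, mem_Ioo]
    exact ⟨by linarith [hz.1], by linarith [hz.2]⟩
  have hgdiff : DifferentiableOn ℂ g O' := by
    rw [hg]
    intro z hz
    rw [hO'] at hz
    have hh : DifferentiableAt ℂ h z := hhO.differentiableAt (hO.mem_nhds hz.1)
    have hzre : δ₁ - 1 < z.re ∧ z.re < δ₂ + 1 := hz.2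
    have hzD : |z.re| ≤ D + 1 := by
      rw [abs_le]
      constructor
      · have := neg_abs_le δ₁; linarith [hzre.1]
      · have := le_abs_self δ₂; linarith [hzre.2]
    have hupos : 0 < ((R:ℂ)^2 - z^2).re := by
      have h1 := plAux_u_re' R z.re z.im
      rw [Complex.re_add_im] at h1
      rw [h1, hR]
      have e1 : z.re^2 ≤ (D+1)^2 := by
        rw [← _root_.sq_abs z.re]
        exact pow_le_pow_left₀ (abs_nonneg _) hzD 2
      have e2 : (D+1)^2 < (D+2)^2 := by nlinarith [hD0]
      linarith [sq_nonneg z.im, e1, e2]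
    have hinner : DifferentiableAt ℂ (fun w : ℂ => (R:ℂ)^2 - w^2) z :=
      (differentiableAt_const _).sub (differentiableAt_pow 2)
    have hlog : DifferentiableAt ℂ (fun w : ℂ => Complex.log ((R:ℂ)^2 - w^2)) z :=
      hinner.clog (Complex.mem_slitPlane_iff.mpr (Or.inl hupos))
    have hF : DifferentiableAt ℂ
        (fun w : ℂ => -(((a2:ℂ) + (b2:ℂ)*w) * Complex.log ((R:ℂ)^2 - w^2))) z :=
      (((differentiableAt_const _).add ((differentiableAt_const _).mul differentiableAt_id)).mul hlog).neg
    exact (hh.mul hF.cexp).differentiableWithinAt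
  clear_value O'
  have hdc : DiffContOnCl ℂ g (Complex.re ⁻¹' Ioo δ₁ δ₂) := by
    apply DifferentiableOn.diffContOnCl
    apply hgdiff.mono
    intro z hz
    apply hstripO'
    have h1 := Complex.continuous_re.closure_preimage_subset (Ioo δ₁ δ₂) hz
    rw [closure_Ioo hδ.ne] at h1
    exact ⟨h1.1, h1.2⟩
  -- boundary bounds
  set T₁ : ℝ := max T₀ 1 with hT₁
  set Mt : ℝ := C₀ * Real.exp Eb * K^(κ/2) with hMt
  clear_value T₁ Mt
  have htail : ∀ (δ' kk : ℝ), a2 + b2*δ' = kk/2 → |kk| ≤ κ → |δ'| ≤ D →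
      (∀ t : ℝ, T₀ ≤ |t| → ‖h ((δ':ℂ)+(t:ℂ)*Complex.I)‖ ≤ C₀ * |t|^kk) →
      ∀ z : ℂ, z.re = δ' → T₁ ≤ |z.im| → ‖g z‖ ≤ Mt := by
    intro δ' kk hkk hkκ' hδD hbd' z hzre hzt
    have ht1 : 1 ≤ |z.im| := le_trans (by rw [hT₁]; exact le_max_right T₀ 1) hzt
    have ht0 : T₀ ≤ |z.im| := le_trans (by rw [hT₁]; exact le_max_left T₀ 1) hzt
    have htpos : 0 < |z.im| := lt_of_lt_of_le one_pos ht1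
    have hzeq : z = (δ':ℂ) + (z.im:ℂ)*Complex.I := by rw [← hzre]; exact (Complex.re_add_im z).symm
    rw [hzeq, hgnorm δ' z.im]
    have hE := hEXP δ' z.im kk hδD ht1 hkk hkκ'
    have hb' := hbd' z.im ht0
    refine le_trans (mul_le_mul hb' hE (Real.exp_nonneg _)
      (mul_nonneg hC₀.le (Real.rpow_nonneg (abs_nonneg _) _))) ?_
    rw [show (C₀ * |z.im|^kk) * (Real.exp Eb * (K^(κ/2) * |z.im| ^ (-kk)))
        = (C₀ * Real.exp Eb * K^(κ/2)) * (|z.im|^kk * |z.im| ^ (-kk)) from by ring,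
      ← Real.rpow_add htpos, add_neg_cancel, Real.rpow_zero, mul_one, hMt]
  have hcpt : ∃ Mc : ℝ, ∀ z : ℂ, (z.re = δ₁ ∨ z.re = δ₂) → |z.im| ≤ T₁ → ‖g z‖ ≤ Mc := by
    have hc1 : Continuous (fun t : ℝ => (δ₁:ℂ) + (t:ℂ)*Complex.I) := by fun_prop
    have hc2 : Continuous (fun t : ℝ => (δ₂:ℂ) + (t:ℂ)*Complex.I) := by fun_prop
    have hKcpt : IsCompact (((fun t : ℝ => (δ₁:ℂ) + (t:ℂ)*Complex.I) '' Icc (-T₁) T₁) ∪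
        ((fun t : ℝ => (δ₂:ℂ) + (t:ℂ)*Complex.I) '' Icc (-T₁) T₁)) :=
      ((isCompact_Icc).image hc1).union ((isCompact_Icc).image hc2)
    have hKsub : (((fun t : ℝ => (δ₁:ℂ) + (t:ℂ)*Complex.I) '' Icc (-T₁) T₁) ∪
        ((fun t : ℝ => (δ₂:ℂ) + (t:ℂ)*Complex.I) '' Icc (-T₁) T₁)) ⊆ O' := by
      rintro z (⟨t, _, rfl⟩ | ⟨t, _, rfl⟩) <;> apply hstripO' <;>
        exact ⟨by simp [hδ.le], by simp [hδ.le]⟩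
    obtain ⟨Mc, hMc⟩ := hKcpt.exists_bound_of_continuousOn (hgdiff.continuousOn.mono hKsub)
    refine ⟨Mc, ?_⟩
    intro z hzre hzt
    apply hMc
    rcases hzre with hre1 | hre1
    · exact Or.inl ⟨z.im, ⟨(abs_le.mp hzt).1, (abs_le.mp hzt).2⟩,
        by rw [← hre1]; exact Complex.re_add_im z⟩
    · exact Or.inr ⟨z.im, ⟨(abs_le.mp hzt).1, (abs_le.mp hzt).2⟩,
        by rw [← hre1]; exact Complex.re_add_im z⟩
  obtain ⟨Mc, hMc⟩ := hcpt
  set M : ℝ := max Mt (max Mc 1) with hM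
  clear_value M
  have hM0 : 0 < M := by
    rw [hM]
    exact lt_of_lt_of_le one_pos (le_trans (le_max_right Mc 1) (le_max_right _ _))
  have hak1 : a2 + b2*δ₁ = k₁/2 := by rw [ha2, hb2, haa]; ring
  have hak2 : a2 + b2*δ₂ = k₂/2 := by
    have h5 : aa + bb*δ₂ = k₂ := by rw [haa]; linarith [hbbmul]
    rw [ha2, hb2]; linarith [h5]
  have hbd₁ : ∀ z : ℂ, z.re = δ₁ → ‖g z‖ ≤ M := by
    intro z hz
    rw [hM]
    rcases le_or_gt T₁ |z.im| with hcase | hcase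
    · exact le_trans (htail δ₁ k₁ hak1 hκ1 hDδ₁ (fun t ht => (hbd t ht).1) z hz hcase)
        (le_max_left _ _)
    · exact le_trans (hMc z (Or.inl hz) hcase.le) (le_trans (le_max_left Mc 1) (le_max_right _ _))
  have hbd₂ : ∀ z : ℂ, z.re = δ₂ → ‖g z‖ ≤ M := by
    intro z hz
    rw [hM]
    rcases le_or_gt T₁ |z.im| with hcase | hcase
    · exact le_trans (htail δ₂ k₂ hak2 hκ2 hDδ₂ (fun t ht => (hbd t ht).2) z hz hcase)
        (le_max_left _ _)
    · exact le_trans (hMc z (Or.inr hz) hcase.le) (le_trans (le_max_left Mc 1) (le_max_right _ _))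
  -- growth condition
  have hB : ∃ c < π/(δ₂ - δ₁), ∃ B, g =O[Filter.comap (_root_.abs ∘ Complex.im) Filter.atTop ⊓
      Filter.principal (Complex.re ⁻¹' Ioo δ₁ δ₂)] fun z => Real.exp (B * Real.exp (c * |z.im|)) := by
    obtain ⟨C₁, Tσ, hC₁, hTσ, hgrow⟩ := hi 1 one_pos
    set c : ℝ := π/(2*(δ₂-δ₁)) with hc
    clear_value c
    have hd2 : (0:ℝ) < δ₂ - δ₁ := by linarith
    have hc0 : 0 < c := by rw [hc]; exact div_pos Real.pi_pos (by linarith)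
    have hclt : c < π/(δ₂-δ₁) := by
      rw [hc]
      exact div_lt_div_of_pos_left Real.pi_pos hd2 (by linarith)
    refine ⟨c, hclt, 1, ?_⟩
    rw [Asymptotics.isBigO_iff]
    refine ⟨C₁ * Real.exp Eb * K^(κ/2), ?_⟩
    have hev : ∀ᶠ x : ℝ in atTop, (κ+1)*x ≤ Real.exp (c*x) := by
      have h2 : Tendsto (fun x : ℝ => c*x) atTop atTop :=
        Tendsto.const_mul_atTop hc0 tendsto_id
      have h0 : Tendsto (fun y : ℝ => Real.exp y / y) atTop atTop := by
        simpa using Real.tendsto_exp_div_pow_atTop 1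
      have h1 := h0.comp h2
      filter_upwards [h1.eventually_ge_atTop ((κ+1)/c), eventually_gt_atTop 0] with x h3 h4
      simp only [Function.comp_apply] at h3
      have hcx : 0 < c*x := by positivity
      rw [le_div_iff₀ hcx] at h3
      calc (κ+1)*x = ((κ+1)/c)*(c*x) := by field_simp
        _ ≤ Real.exp (c*x) := h3
    obtain ⟨N, hN⟩ := eventually_atTop.mp (hev.and (eventually_ge_atTop (max Tσ 1)))
    have hevz : ∀ᶠ z : ℂ in Filter.comap (_root_.abs ∘ Complex.im) Filter.atTop,
        N ≤ (_root_.abs ∘ Complex.im) z :=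
      tendsto_comap.eventually (eventually_ge_atTop N)
    rw [Filter.eventually_inf_principal]
    filter_upwards [hevz] with z hz hzs
    simp only [Function.comp_apply] at hz
    obtain ⟨hN1, hN2⟩ := hN |z.im| hz
    have ht1 : 1 ≤ |z.im| := le_trans (le_max_right Tσ 1) hN2
    have htσ : Tσ ≤ |z.im| := le_trans (le_max_left Tσ 1) hN2
    have hδa : δ₁ ≤ z.re := (hzs.1 : δ₁ < z.re).le
    have hδb : z.re ≤ δ₂ := (hzs.2 : z.re < δ₂).le
    have hδD := hDδ z.re hδa hδb
    have hgr := hgrow z.re z.im hδa hδb htσ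
    have hkk2 : a2 + b2*z.re = (aa + bb*z.re)/2 := by rw [ha2, hb2]; ring
    have hkκ' := hkκ z.re hδa hδb
    have hE := hEXP z.re z.im (aa + bb*z.re) hδD ht1 hkk2 hkκ'
    have step1 : ‖g z‖ ≤ (C₁ * Real.exp (1*|z.im|)) *
        (Real.exp Eb * (K^(κ/2) * |z.im| ^ (-(aa + bb*z.re)))) := by
      have hgz : ‖g z‖ = ‖g ((z.re:ℂ) + (z.im:ℂ)*Complex.I)‖ := by rw [Complex.re_add_im]
      rw [hgz, hgnorm z.re z.im]
      exact mul_le_mul hgr hE (Real.exp_nonneg _)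
        (mul_nonneg hC₁.le (Real.exp_nonneg _))
    have ht0' : (0:ℝ) < |z.im| := lt_of_lt_of_le one_pos ht1
    have step2 : |z.im| ^ (-(aa + bb*z.re)) ≤ Real.exp (κ*|z.im|) := by
      have l1 : |z.im| ^ (-(aa + bb*z.re)) ≤ |z.im| ^ κ :=
        Real.rpow_le_rpow_of_exponent_le ht1 (le_trans (neg_le_abs _) hkκ')
      have l2 : |z.im| ^ κ = Real.exp (Real.log |z.im| * κ) :=
        Real.rpow_def_of_pos ht0' κ
      have l3 : Real.log |z.im| * κ ≤ κ * |z.im| := by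
        have l4 := Real.log_le_sub_one_of_pos ht0'
        have l5 : Real.log |z.im| ≤ |z.im| := by linarith only [l4]
        calc Real.log |z.im| * κ = κ * Real.log |z.im| := by ring
          _ ≤ κ * |z.im| := mul_le_mul_of_nonneg_left l5 hκ0
      rw [l2] at l1
      exact le_trans l1 (Real.exp_le_exp.mpr l3)
    have mid : (C₁ * Real.exp (1*|z.im|)) * (Real.exp Eb * (K^(κ/2) * |z.im| ^ (-(aa + bb*z.re))))
        ≤ (C₁ * Real.exp (1*|z.im|)) * (Real.exp Eb * (K^(κ/2) * Real.exp (κ*|z.im|))) := by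
      apply mul_le_mul_of_nonneg_left _ (mul_nonneg hC₁.le (Real.exp_nonneg _))
      apply mul_le_mul_of_nonneg_left _ (Real.exp_nonneg _)
      exact mul_le_mul_of_nonneg_left step2 (Real.rpow_nonneg hK0.le _)
    have mid2 : (C₁ * Real.exp (1*|z.im|)) * (Real.exp Eb * (K^(κ/2) * Real.exp (κ*|z.im|)))
        = (C₁ * Real.exp Eb * K^(κ/2)) * Real.exp ((κ+1)*|z.im|) := by
      rw [show (C₁ * Real.exp (1*|z.im|)) * (Real.exp Eb * (K^(κ/2) * Real.exp (κ*|z.im|)))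
          = (C₁ * Real.exp Eb * K^(κ/2)) * (Real.exp (1*|z.im|) * Real.exp (κ*|z.im|)) from by ring,
        ← Real.exp_add]
      congr 1
      ring
    have step3 : ‖g z‖ ≤ (C₁ * Real.exp Eb * K^(κ/2)) * Real.exp ((κ+1)*|z.im|) :=
      le_trans step1 (le_trans mid (le_of_eq mid2))
    have hrhs : ‖Real.exp (1 * Real.exp (c*|z.im|))‖ = Real.exp (Real.exp (c*|z.im|)) := by
      rw [Real.norm_eq_abs, Real.abs_exp, one_mul]
    rw [hrhs]
    refine le_trans step3 (mul_le_mul_of_nonneg_left (Real.exp_le_exp.mpr hN1) ?_)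
    exact mul_nonneg (mul_nonneg hC₁.le (Real.exp_nonneg _)) (Real.rpow_nonneg hK0.le _)
  -- conclusion
  refine ⟨M * Real.exp Eb * K^(κ/2), 1,
    mul_pos (mul_pos hM0 (Real.exp_pos _)) (Real.rpow_pos_of_pos hK0 _), one_pos, ?_⟩
  intro δ t hδa hδb ht1
  rw [hexpeq δ]
  have hδD := hDδ δ hδa hδb
  have hPL : ‖g ((δ:ℂ)+(t:ℂ)*Complex.I)‖ ≤ M :=
    PhragmenLindelof.vertical_strip hdc hB hbd₁ hbd₂ (by simpa using hδa) (by simpa using hδb)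
  obtain ⟨hupos, hvlow, hvup⟩ := plAux_ubounds D R K δ t hR hK hδD
  have ht0' : (0:ℝ) < |t| := lt_of_lt_of_le one_pos ht1
  have ht2 : (0:ℝ) < t^2 := by rw [← _root_.sq_abs]; exact pow_pos ht0' 2
  have hv0 : 0 < ‖(R:ℂ)^2 - ((δ:ℂ)+(t:ℂ)*Complex.I)^2‖ := lt_of_lt_of_le ht2 hvlow
  have harg := hargbd δ t hδD
  have hkκ' := hkκ δ hδa hδb
  have heq : ‖h ((δ:ℂ)+(t:ℂ)*Complex.I)‖ = ‖g ((δ:ℂ)+(t:ℂ)*Complex.I)‖ *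
      Real.exp ((a2+b2*δ) * Real.log (‖(R:ℂ)^2 - ((δ:ℂ)+(t:ℂ)*Complex.I)^2‖)
        - b2*t * ((R:ℂ)^2 - ((δ:ℂ)+(t:ℂ)*Complex.I)^2).arg) := by
    rw [hgnorm δ t, mul_assoc, ← Real.exp_add, neg_add_cancel, Real.exp_zero, mul_one]
  have hX : (a2+b2*δ) * Real.log (‖(R:ℂ)^2 - ((δ:ℂ)+(t:ℂ)*Complex.I)^2‖)
      - b2*t * ((R:ℂ)^2 - ((δ:ℂ)+(t:ℂ)*Complex.I)^2).arg
      ≤ Eb + Real.log (‖(R:ℂ)^2 - ((δ:ℂ)+(t:ℂ)*Complex.I)^2‖) * ((aa+bb*δ)/2) := by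
    have h1 : -(b2*t * ((R:ℂ)^2 - ((δ:ℂ)+(t:ℂ)*Complex.I)^2).arg) ≤ Eb :=
      le_trans (neg_le_abs _) harg
    have h2 : a2+b2*δ = (aa+bb*δ)/2 := by rw [ha2, hb2]; ring
    rw [h2]
    linarith
  have hExpBound : Real.exp ((a2+b2*δ) * Real.log (‖(R:ℂ)^2 - ((δ:ℂ)+(t:ℂ)*Complex.I)^2‖)
        - b2*t * ((R:ℂ)^2 - ((δ:ℂ)+(t:ℂ)*Complex.I)^2).arg)
      ≤ Real.exp Eb * (K^(κ/2) * |t| ^ (aa+bb*δ)) := by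
    calc Real.exp ((a2+b2*δ) * Real.log (‖(R:ℂ)^2 - ((δ:ℂ)+(t:ℂ)*Complex.I)^2‖)
          - b2*t * ((R:ℂ)^2 - ((δ:ℂ)+(t:ℂ)*Complex.I)^2).arg)
        ≤ Real.exp (Eb + Real.log (‖(R:ℂ)^2 - ((δ:ℂ)+(t:ℂ)*Complex.I)^2‖) * ((aa+bb*δ)/2)) :=
        Real.exp_le_exp.mpr hX
      _ = Real.exp Eb * (‖(R:ℂ)^2 - ((δ:ℂ)+(t:ℂ)*Complex.I)^2‖) ^ ((aa+bb*δ)/2) := by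
        rw [Real.exp_add, Real.rpow_def_of_pos hv0]
      _ ≤ Real.exp Eb * (K^(κ/2) * |t| ^ (aa+bb*δ)) := by
        apply mul_le_mul_of_nonneg_left _ (Real.exp_nonneg _)
        exact plAux_rpow hK1 hkκ' ht1 hvlow (hvup ht1)
  rw [heq]
  refine le_trans (mul_le_mul hPL hExpBound (Real.exp_nonneg _) hM0.le) (le_of_eq (by ring))
end
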